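/- Let f: ℝ^d → ℝ be differentiable with L-Lipschitz gradient, and let u ∈ {−1,1}^d be a uniformly random Rademacher vector. Define the two-point estimator ĝ = (1/μ)[f(x + μu) − f(x)] u for μ > 0. Then ‖E_u[ĝ] − ∇f(x)‖ ≤ μ L d^{3/2} / 2. -/

import Mathlib

/-!
Rademacher vectors are isotropic: `E[u_i u_j] = δ_ij` (for `i ≠ j`, flipping the `i`-th sign
negates the summand), hence `E[⟪v, u⟫ u] = v`. So the bias is the average of
`ĝ(u) - ⟪∇f x, u⟫ u = μ⁻¹ (f (x + μ u) - f x - ⟪∇f x, μ u⟫) u`, and the descent lemma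
`|f (x + v) - f x - ⟪∇f x, v⟫| ≤ L ‖v‖² / 2` bounds each term by `μ L ‖u‖³ / 2`, where
`‖u‖ = √d`.
-/

open Finset

local notation "⟪" a ", " b "⟫" => @inner ℝ _ _ a b

noncomputable def signVec {ι : Type*} (s : ι → Bool) : EuclideanSpace ℝ ι :=
  WithLp.toLp 2 fun i => if s i then 1 else -1

lemma signVec_apply_mul_self {ι : Type*} (s : ι → Bool) (i : ι) :
    signVec s i * signVec s i = 1 := by
  cases h : s i <;> simp [signVec, h]

section SignVector

variable {ι : Type*} [Fintype ι]

lemma norm_signVec (s : ι → Bool) : ‖signVec s‖ = √(Fintype.card ι) := by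
  simp [EuclideanSpace.norm_eq, signVec, apply_ite]

lemma sum_signVec_mul_signVec [DecidableEq ι] (i j : ι) :
    ∑ s : ι → Bool, signVec s i * signVec s j = if i = j then 2 ^ Fintype.card ι else 0 := by
  split_ifs with hij
  · simp [hij, signVec_apply_mul_self]
  · refine sum_ninvolution (fun s => Function.update s i (!s i)) (fun s => ?_)
      (fun s _ h => by simpa using congrFun h i) (fun _ => mem_univ _) (fun s => by simp)
    cases hi : s i <;> cases hj : s j <;>
      simp [signVec, Function.update_of_ne (Ne.symm hij), hi, hj]

lemma sum_inner_signVec_smul [DecidableEq ι] (v : EuclideanSpace ℝ ι) :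
    ∑ s : ι → Bool, ⟪v, signVec s⟫ • signVec s = (2 ^ Fintype.card ι : ℝ) • v := by
  ext i
  simp only [WithLp.ofLp_sum, Finset.sum_apply, PiLp.smul_apply, smul_eq_mul, PiLp.inner_apply,
    RCLike.inner_apply, conj_trivial, sum_mul]
  rw [sum_comm]
  simp_rw [mul_comm (signVec _ _) (v _), mul_assoc, ← mul_sum, sum_signVec_mul_signVec]
  simp [mul_comm]

end SignVector

section Smooth

variable {E : Type*} [NormedAddCommGroup E] [InnerProductSpace ℝ E] [CompleteSpace E]
  {f : E → ℝ} {L : ℝ}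

lemma hasDerivAt_comp_add_smul (hf : Differentiable ℝ f) (x v : E) (t : ℝ) :
    HasDerivAt (fun t : ℝ => f (x + t • v)) ⟪gradient f (x + t • v), v⟫ t := by
  have hline : HasDerivAt (fun t : ℝ => x + t • v) v t := by
    simpa using ((hasDerivAt_id t).smul_const v).const_add x
  have hgrad :
      HasFDerivAt f (InnerProductSpace.toDual ℝ E (gradient f (x + t • v))) (x + t • v) :=
    hasGradientAt_iff_hasFDerivAt.mp (hf _).hasGradientAt
  simpa [Function.comp_def] using hgrad.comp_hasDerivAt t hline

lemma abs_sub_sub_inner_gradient_le (hf : Differentiable ℝ f)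
    (hL : ∀ x y, ‖gradient f x - gradient f y‖ ≤ L * ‖x - y‖) (x v : E) :
    |f (x + v) - f x - ⟪gradient f x, v⟫| ≤ L / 2 * ‖v‖ ^ 2 := by
  set φ : ℝ → ℝ := fun t => f (x + t • v) - f x - t * ⟪gradient f x, v⟫
  have hφ (t : ℝ) : HasDerivAt φ ⟪gradient f (x + t • v) - gradient f x, v⟫ t := by
    have := ((hasDerivAt_comp_add_smul hf x v t).sub_const (f x)).sub
      ((hasDerivAt_id t).mul_const ⟪gradient f x, v⟫)
    rwa [one_mul, ← inner_sub_left] at this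
  have hB (t : ℝ) : HasDerivAt (fun t : ℝ => L / 2 * ‖v‖ ^ 2 * t ^ 2)
      (L / 2 * ‖v‖ ^ 2 * (2 * t)) t := by
    simpa using (hasDerivAt_pow 2 t).const_mul (L / 2 * ‖v‖ ^ 2)
  have hφ' (t : ℝ) (ht : t ∈ Set.Ico (0 : ℝ) 1) :
      ‖⟪gradient f (x + t • v) - gradient f x, v⟫‖ ≤ L / 2 * ‖v‖ ^ 2 * (2 * t) :=
    calc ‖⟪gradient f (x + t • v) - gradient f x, v⟫‖
        ≤ ‖gradient f (x + t • v) - gradient f x‖ * ‖v‖ := norm_inner_le_norm _ _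
      _ ≤ L * ‖t • v‖ * ‖v‖ := by
        gcongr
        simpa using hL (x + t • v) x
      _ = L / 2 * ‖v‖ ^ 2 * (2 * t) := by
        rw [norm_smul, Real.norm_of_nonneg ht.1]; ring
  simpa [φ] using image_norm_le_of_norm_deriv_right_le_deriv_boundary
    (fun t _ => (hφ t).continuousAt.continuousWithinAt) (fun t _ => (hφ t).hasDerivWithinAt)
    (by simp [φ]) hB hφ' (Set.right_mem_Icc.mpr zero_le_one)

lemma norm_slope_smul_sub_inner_gradient_smul_le (hf : Differentiable ℝ f)
    (hL : ∀ x y, ‖gradient f x - gradient f y‖ ≤ L * ‖x - y‖) {μ : ℝ} (hμ : 0 < μ) (x v : E) :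
    ‖(μ⁻¹ * (f (x + μ • v) - f x)) • v - ⟪gradient f x, v⟫ • v‖ ≤ μ * L * ‖v‖ ^ 3 / 2 := by
  have hdesc := abs_sub_sub_inner_gradient_le hf hL x (μ • v)
  rw [real_inner_smul_right, norm_smul, Real.norm_of_nonneg hμ.le] at hdesc
  have hslope : μ⁻¹ * (f (x + μ • v) - f x) - ⟪gradient f x, v⟫
      = μ⁻¹ * (f (x + μ • v) - f x - μ * ⟪gradient f x, v⟫) := by
    field_simp
  calc ‖(μ⁻¹ * (f (x + μ • v) - f x)) • v - ⟪gradient f x, v⟫ • v‖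
      = μ⁻¹ * |f (x + μ • v) - f x - μ * ⟪gradient f x, v⟫| * ‖v‖ := by
        rw [← sub_smul, norm_smul, Real.norm_eq_abs, hslope, abs_mul, abs_of_pos (inv_pos.2 hμ)]
    _ ≤ μ⁻¹ * (L / 2 * (μ * ‖v‖) ^ 2) * ‖v‖ := by gcongr
    _ = μ * L * ‖v‖ ^ 3 / 2 := by field_simp

end Smooth

/-- Bias bound for the two-point Rademacher zeroth-order gradient estimator:
`‖E_u[ĝ] − ∇f(x)‖ ≤ μ L d^{3/2} / 2`. The expectation over the uniform
distribution on `{-1,1}^d` is written as an average over sign patterns. -/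
theorem zo_estimator_bias (d : ℕ) (f : EuclideanSpace ℝ (Fin d) → ℝ)
    (L : ℝ) (hf : Differentiable ℝ f)
    (hL : ∀ x y, ‖gradient f x - gradient f y‖ ≤ L * ‖x - y‖)
    (μ : ℝ) (hμ : 0 < μ) (x : EuclideanSpace ℝ (Fin d))
    (u : (Fin d → Bool) → EuclideanSpace ℝ (Fin d))
    (hu : ∀ s i, u s i = if s i then 1 else -1)
    (g : (Fin d → Bool) → EuclideanSpace ℝ (Fin d))
    (hg : ∀ s, g s = (μ⁻¹ * (f (x + μ • u s) - f x)) • u s) :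
    ‖((2 : ℝ) ^ d)⁻¹ • (∑ s : Fin d → Bool, g s) - gradient f x‖ ≤
      μ * L * (d : ℝ) ^ ((3 : ℝ) / 2) / 2 := by
  obtain rfl : u = signVec := funext fun s => by ext i; simp [hu, signVec]
  have hsample (s : Fin d → Bool) :
      ‖g s - ⟪gradient f x, signVec s⟫ • signVec s‖ ≤ μ * L * (d : ℝ) ^ ((3 : ℝ) / 2) / 2 := by
    have hd : √(d : ℝ) ^ 3 = (d : ℝ) ^ ((3 : ℝ) / 2) := by
      rw [Real.sqrt_eq_rpow, ← Real.rpow_natCast, ← Real.rpow_mul d.cast_nonneg]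
      norm_num
    simpa [hg, norm_signVec, hd] using
      norm_slope_smul_sub_inner_gradient_smul_le hf hL hμ x (signVec s)
  have h2d : (0 : ℝ) < 2 ^ d := by positivity
  calc ‖((2 : ℝ) ^ d)⁻¹ • (∑ s : Fin d → Bool, g s) - gradient f x‖
      = ‖((2 : ℝ) ^ d)⁻¹ • ∑ s : Fin d → Bool, (g s - ⟪gradient f x, signVec s⟫ • signVec s)‖ := by
        rw [sum_sub_distrib, sum_inner_signVec_smul, Fintype.card_fin, smul_sub, smul_smul,
          inv_mul_cancel₀ h2d.ne', one_smul]
    _ ≤ ((2 : ℝ) ^ d)⁻¹ * ∑ _s : Fin d → Bool, μ * L * (d : ℝ) ^ ((3 : ℝ) / 2) / 2 := by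
        rw [norm_smul, Real.norm_of_nonneg (inv_nonneg.2 h2d.le)]
        gcongr
        exact norm_sum_le_of_le _ fun s _ => hsample s
    _ = μ * L * (d : ℝ) ^ ((3 : ℝ) / 2) / 2 := by
        rw [sum_const, card_univ, Fintype.card_fun, Fintype.card_bool, Fintype.card_fin,
          nsmul_eq_mul]
        push_cast
        field_simp
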